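/- Let q+1 parameters a₁,…,a_{q+1} and q parameters b₁,…,b_q be positive reals with γ := ∑ b_j − ∑ a_j < 0. Then lim_{z→1⁻} (1-z)^{-γ} · ₍q+1₎F_q(a₁,…,a_{q+1}; b₁,…,b_q; z) = Γ(-γ) ∏ Γ(b_j) / ∏ Γ(a_j). -/

import Mathlib

open Filter

/-- The generalized hypergeometric function `_{q+1}F_q` as a power series. -/
noncomputable def genHyp (q : ℕ) (a : Fin (q+1) → ℝ) (b : Fin q → ℝ) (z : ℝ) : ℝ :=
  ∑' k : ℕ,
    (∏ i, (ascPochhammer ℝ k).eval (a i)) /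
      ((∏ j, (ascPochhammer ℝ k).eval (b j)) * (k.factorial : ℝ)) * z ^ k

/-!
Put `s = -γ > 0`. The binomial series `(1 - z) ^ (-s) = ∑ (s)ₖ / k! zᵏ` has positive
coefficients and tends to `∞` as `z → 1⁻`. By Euler's limit formula `(x)ₖ / k! ∼ k ^ (x - 1) / Γ(x)`,
so the `k`-th coefficient of `₍q+1₎F_q` divided by `(s)ₖ / k!` tends to `Γ(s) ∏ Γ(bⱼ) / ∏ Γ(aᵢ)`:
the powers of `k` cancel exactly because `∑ aᵢ = ∑ bⱼ + s`. An Abelian argument then transfers this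
limit of coefficient ratios to the ratio of the two power series.
-/

open Topology Asymptotics Set Finset

open scoped Nat

theorem Ring.choose_add_sub_one_eq_ascPochhammer_div_factorial (s : ℝ) (k : ℕ) :
    Ring.choose (s + k - 1) k = (ascPochhammer ℝ k).eval s / k ! := by
  rw [← Ring.multichoose_eq, eq_div_iff (by positivity), mul_comm, ← nsmul_eq_mul,
    Ring.factorial_nsmul_multichoose_eq_ascPochhammer, Polynomial.ascPochhammer_smeval_eq_eval]

theorem hasSum_ascPochhammer_div_factorial_mul_pow (s : ℝ) {z : ℝ} (hz : |z| < 1) :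
    HasSum (fun k : ℕ => (ascPochhammer ℝ k).eval s / k ! * z ^ k) ((1 - z) ^ (-s)) := by
  have h := (Real.one_div_one_sub_rpow_hasFPowerSeriesOnBall_zero s).hasSum
    (y := z) (by simpa [enorm_eq_nnnorm, ← NNReal.coe_lt_one] using hz)
  rw [Real.rpow_neg (by linarith [le_abs_self z])]
  simpa [FormalMultilinearSeries.ofScalars_apply_eq, mul_comm,
    Ring.choose_add_sub_one_eq_ascPochhammer_div_factorial] using h

theorem tendsto_one_sub_rpow_neg_nhdsLT_one {s : ℝ} (hs : 0 < s) :
    Tendsto (fun z : ℝ => (1 - z) ^ (-s)) (𝓝[<] 1) atTop := by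
  refine (tendsto_rpow_neg_nhdsGT_zero (neg_neg_of_pos hs)).comp ?_
  refine tendsto_nhdsWithin_of_tendsto_nhds_of_eventually_within _ ?_ ?_
  · exact ((continuous_sub_left 1).tendsto' 1 0 (sub_self 1)).mono_left nhdsWithin_le_nhds
  · filter_upwards [self_mem_nhdsWithin] with z hz
    exact sub_pos.2 (mem_Iio.1 hz)

theorem isLittleO_tsum_mul_pow_nhdsLT_one {e d : ℕ → ℝ} {D : ℝ → ℝ} (hd : ∀ k, 0 ≤ d k)
    (he : e =o[atTop] d) (hD : ∀ z ∈ Ioo (0 : ℝ) 1, HasSum (fun k => d k * z ^ k) (D z))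
    (hDtop : Tendsto D (𝓝[<] 1) atTop) :
    (fun z => ∑' k, e k * z ^ k) =o[𝓝[<] 1] D := by
  rw [isLittleO_iff]
  intro ε hε
  obtain ⟨N, hN⟩ := eventually_atTop.1 (he.def (half_pos hε))
  set B := ∑ k ∈ range N, |e k|
  filter_upwards [Ioo_mem_nhdsLT one_pos, hDtop.eventually_ge_atTop (2 * B / ε)] with z hz hDz
  -- the first `N` terms are bounded by `B`, the tail by `ε / 2` times that of `D z`
  have hbound : ∀ k, ‖e k * z ^ k‖ ≤ (if k < N then |e k| else 0) + ε / 2 * (d k * z ^ k) := by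
    intro k
    have hzk : 0 ≤ z ^ k := pow_nonneg hz.1.le k
    rw [norm_mul, Real.norm_eq_abs, Real.norm_of_nonneg hzk]
    split_ifs with hk
    · have : z ^ k ≤ 1 := pow_le_one₀ hz.1.le hz.2.le
      nlinarith [abs_nonneg (e k), mul_nonneg (hd k) hzk]
    · have := hN k (not_lt.1 hk)
      rw [Real.norm_eq_abs, Real.norm_of_nonneg (hd k)] at this
      nlinarith
  have hhead : HasSum (fun k => if k < N then |e k| else 0) B := by
    have h : HasSum (fun k => if k < N then |e k| else 0)
        (∑ k ∈ range N, if k < N then |e k| else 0) :=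
      hasSum_sum_of_ne_finset_zero fun k hk => if_neg (by simpa using hk)
    convert h using 1
    exact sum_congr rfl fun k hk => (if_pos (mem_range.1 hk)).symm
  have hsum := hhead.add ((hD z hz).mul_left (ε / 2))
  have hB : 0 ≤ B := sum_nonneg fun k _ => abs_nonneg (e k)
  have hDpos : 0 ≤ D z := le_trans (by positivity) hDz
  calc ‖∑' k, e k * z ^ k‖ ≤ B + ε / 2 * D z := tsum_of_norm_bounded hsum hbound
    _ ≤ ε * ‖D z‖ := by
      rw [Real.norm_of_nonneg hDpos]
      rw [div_le_iff₀ hε] at hDz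
      linarith

theorem tendsto_tsum_mul_pow_div_nhdsLT_one {c d : ℕ → ℝ} {D : ℝ → ℝ} {A : ℝ}
    (hd : ∀ k, 0 < d k) (hcd : Tendsto (fun k => c k / d k) atTop (𝓝 A))
    (hD : ∀ z ∈ Ioo (0 : ℝ) 1, HasSum (fun k => d k * z ^ k) (D z))
    (hDtop : Tendsto D (𝓝[<] 1) atTop) :
    Tendsto (fun z => (∑' k, c k * z ^ k) / D z) (𝓝[<] 1) (𝓝 A) := by
  have he : (fun k => c k - A * d k) =o[atTop] d := by
    rw [isLittleO_iff_tendsto' (.of_forall fun k h => absurd h (hd k).ne')]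
    simpa [sub_div, mul_div_cancel_right₀ _ (hd _).ne'] using hcd.sub_const A
  have hc : ∀ z ∈ Ioo (0 : ℝ) 1, HasSum (fun k => c k * z ^ k) (∑' k, c k * z ^ k) := by
    intro z hz
    refine (summable_of_isBigO_nat (hD z hz).summable ?_).hasSum
    have hcd : c =O[atTop] d := by
      simpa using he.isBigO.add (isBigO_const_mul_self A d atTop)
    exact hcd.mul (isBigO_refl _ _)
  have hlim := (isLittleO_tsum_mul_pow_nhdsLT_one (fun k => (hd k).le) he hD hDtop
    ).tendsto_div_nhds_zero.add_const A
  rw [zero_add] at hlim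
  refine hlim.congr' ?_
  filter_upwards [Ioo_mem_nhdsLT one_pos, hDtop.eventually_gt_atTop 0] with z hz hDz
  have hsub : ∑' k, (c k - A * d k) * z ^ k = (∑' k, c k * z ^ k) - A * D z := by
    simpa [sub_mul, mul_assoc] using ((hc z hz).sub ((hD z hz).mul_left A)).tsum_eq
  rw [hsub]
  field_simp
  ring

theorem ascPochhammer_eval_eq_prod_range {R : Type*} [CommSemiring R] (r : R) (n : ℕ) :
    (ascPochhammer R n).eval r = ∏ j ∈ range n, (r + j) := by
  induction n with
  | zero => simp
  | succ n ih => rw [ascPochhammer_succ_eval, ih, prod_range_succ]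

theorem tendsto_ascPochhammer_div_factorial_mul_rpow {x : ℝ} (hx : 0 < x) :
    Tendsto (fun k : ℕ => (ascPochhammer ℝ k).eval x / (k ! * (k : ℝ) ^ (x - 1))) atTop
      (𝓝 (Real.Gamma x)⁻¹) := by
  have h := (tendsto_natCast_div_add_atTop x).mul
    ((Real.GammaSeq_tendsto_Gamma x).inv₀ (Real.Gamma_pos_of_pos hx).ne')
  rw [one_mul] at h
  refine h.congr' ?_
  filter_upwards [eventually_gt_atTop 0] with k hk
  have hk' : (0 : ℝ) < k := Nat.cast_pos.2 hk
  rw [Real.GammaSeq, prod_range_succ, ← ascPochhammer_eval_eq_prod_range,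
    Real.rpow_sub_one hk'.ne']
  have := ascPochhammer_pos k x hx
  field_simp
  ring

noncomputable def genHypCoeff (q : ℕ) (a : Fin (q + 1) → ℝ) (b : Fin q → ℝ) (k : ℕ) : ℝ :=
  (∏ i, (ascPochhammer ℝ k).eval (a i)) / ((∏ j, (ascPochhammer ℝ k).eval (b j)) * k !)

theorem tendsto_genHypCoeff_div_ascPochhammer {q : ℕ} {a : Fin (q + 1) → ℝ} {b : Fin q → ℝ}
    {s : ℝ} (ha : ∀ i, 0 < a i) (hb : ∀ j, 0 < b j) (hs : 0 < s)
    (hsum : ∑ i, a i = ∑ j, b j + s) :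
    Tendsto (fun k => genHypCoeff q a b k / ((ascPochhammer ℝ k).eval s / k !)) atTop
      (𝓝 (Real.Gamma s * (∏ j, Real.Gamma (b j)) / ∏ i, Real.Gamma (a i))) := by
  set P : ℝ → ℕ → ℝ := fun x k => (ascPochhammer ℝ k).eval x / (k ! * (k : ℝ) ^ (x - 1))
  have hP : ∀ x, 0 < x → Tendsto (P x) atTop (𝓝 (Real.Gamma x)⁻¹) := fun x hx =>
    tendsto_ascPochhammer_div_factorial_mul_rpow hx
  have hΓ : ∀ x, 0 < x → Real.Gamma x ≠ 0 := fun x hx => (Real.Gamma_pos_of_pos hx).ne'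
  have h := (tendsto_finsetProd univ fun i _ => hP (a i) (ha i)).div
    ((tendsto_finsetProd univ fun j _ => hP (b j) (hb j)).mul (hP s hs))
    (mul_ne_zero (prod_ne_zero_iff.2 fun j _ => inv_ne_zero (hΓ _ (hb j)))
      (inv_ne_zero (hΓ s hs)))
  have hlim : (∏ i, (Real.Gamma (a i))⁻¹) / ((∏ j, (Real.Gamma (b j))⁻¹) * (Real.Gamma s)⁻¹) =
      Real.Gamma s * (∏ j, Real.Gamma (b j)) / ∏ i, Real.Gamma (a i) := by
    simp only [prod_inv_distrib]
    field_simp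
  rw [hlim] at h
  refine h.congr' ?_
  filter_upwards [eventually_gt_atTop 0] with k hk
  have hk' : (0 : ℝ) < k := Nat.cast_pos.2 hk
  have hprod : ∀ {n : ℕ} (c : Fin n → ℝ), ∏ i, P (c i) k =
      (∏ i, (ascPochhammer ℝ k).eval (c i)) / ((k ! : ℝ) ^ n * (k : ℝ) ^ (∑ i, (c i - 1))) := by
    intro n c
    simp only [P, prod_div_distrib, prod_mul_distrib, prod_const, card_univ, Fintype.card_fin,
      Real.rpow_sum_of_pos hk']
  have hexp : ∑ i, (a i - 1) = ∑ j, (b j - 1) + (s - 1) := by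
    simp only [sum_sub_distrib, sum_const, card_univ, Fintype.card_fin, nsmul_eq_mul]
    push_cast
    linarith
  rw [Pi.div_apply, hprod, hprod, hexp, Real.rpow_add hk']
  have := ascPochhammer_pos k s hs
  simp only [genHypCoeff, P, pow_succ]
  field_simp

theorem genHyp_eq_tsum (q : ℕ) (a : Fin (q + 1) → ℝ) (b : Fin q → ℝ) (z : ℝ) :
    genHyp q a b z = ∑' k, genHypCoeff q a b k * z ^ k := rfl

theorem genHyp_limit_at_one (q : ℕ) (a : Fin (q+1) → ℝ) (b : Fin q → ℝ)
    (ha : ∀ i, 0 < a i) (hb : ∀ j, 0 < b j)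
    (γ : ℝ) (hγdef : γ = (∑ j, b j) - (∑ i, a i)) (hγ : γ < 0) :
    Tendsto (fun z : ℝ => (1 - z) ^ (-γ) * genHyp q a b z)
      (nhdsWithin 1 (Set.Iio 1))
      (nhds (Real.Gamma (-γ) * (∏ j, Real.Gamma (b j)) / ∏ i, Real.Gamma (a i))) := by
  have hs : 0 < -γ := neg_pos.2 hγ
  have hbinom : ∀ z ∈ Ioo (0 : ℝ) 1,
      HasSum (fun k => (ascPochhammer ℝ k).eval (-γ) / k ! * z ^ k) ((1 - z) ^ (- -γ)) :=
    fun z hz => hasSum_ascPochhammer_div_factorial_mul_pow (-γ)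
      (abs_lt.2 ⟨by linarith [hz.1], hz.2⟩)
  have hlim := tendsto_tsum_mul_pow_div_nhdsLT_one
    (fun k => div_pos (ascPochhammer_pos k _ hs) (Nat.cast_pos.2 k.factorial_pos))
    (tendsto_genHypCoeff_div_ascPochhammer ha hb hs (by rw [hγdef]; ring)) hbinom
    (tendsto_one_sub_rpow_neg_nhdsLT_one hs)
  refine hlim.congr' ?_
  filter_upwards [self_mem_nhdsWithin] with z hz
  rw [genHyp_eq_tsum, Real.rpow_neg (sub_pos.2 (mem_Iio.1 hz)).le, div_inv_eq_mul, mul_comm]
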